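/- arXiv:2305.02826 — 8 statements merged into one kernel-verified Lean document; each statement's English description precedes it below -/
import Mathlib

section
/- The finitely supported distribution monad is strongly representable in the following concrete sense: given a Markov kernel f : A → PMF (X × Y), define f•(a)(x) := Σ_y f(a)(x,y). Then there exists a kernel f⋄ : A → PMF (X × PMF Y) such that (i) pushing forward f⋄ along (id_X, samp) recovers f, i.e. for all a, x, y: Σ_{q : PMF Y} f⋄(a)(x, q) · q(y) = f(a)(x,y); (ii) f⋄ is deterministic given X, i.e. for each a and each x with f•(a)(x) > 0 there is a single q with f⋄(a)(x, q) > 0; and moreover any two kernels satisfying (i) and (ii) assign, for each a and each x with f•(a)(x) > 0, the same unique q, namely q(y) = f(a)(x,y) / f•(a)(x). -/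
/-! The representing kernel disintegrates `f a` along `X`: it pairs each `x` with the
conditional distribution of `Y` given `x`. Conversely, if a kernel puts positive weight `w` on a
single `q` over `x`, its sampling identity reads `w * q y = f a (x, y)`; summing over `y`
identifies `w` with the marginal of `x`, and hence `q` with the conditional distribution. -/

open scoped ENNReal

namespace PMF

variable {X Y : Type*}

theorem map_fst_apply (p : PMF (X × Y)) (x : X) : p.map Prod.fst x = ∑' y, p (x, y) := by
  rw [map_apply, ENNReal.tsum_prod', tsum_eq_single x fun x' hx' => by simp [Ne.symm hx']]
  simp

theorem tsum_apply_prod_ne_top (p : PMF (X × Y)) (x : X) : ∑' y, p (x, y) ≠ ∞ :=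
  p.map_fst_apply x ▸ (p.map Prod.fst).apply_ne_top x

/-- At an `x` of probability zero this is, arbitrarily, the second marginal. -/
noncomputable def condSnd (p : PMF (X × Y)) (x : X) : PMF Y :=
  if h : ∑' y, p (x, y) = 0 then p.map Prod.snd
  else normalize (fun y => p (x, y)) h (p.tsum_apply_prod_ne_top x)

theorem condSnd_apply {p : PMF (X × Y)} {x : X} (h : ∑' y, p (x, y) ≠ 0) (y : Y) :
    p.condSnd x y = p (x, y) / ∑' y', p (x, y') := by
  rw [condSnd, dif_neg h, normalize_apply, div_eq_mul_inv]

theorem tsum_mul_condSnd_apply (p : PMF (X × Y)) (x : X) (y : Y) :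
    (∑' y', p (x, y')) * p.condSnd x y = p (x, y) := by
  by_cases h : ∑' y', p (x, y') = 0
  · rw [h, zero_mul, ENNReal.tsum_eq_zero.mp h y]
  · rw [condSnd_apply h, ENNReal.mul_div_cancel h (p.tsum_apply_prod_ne_top x)]

noncomputable def disintegrate (p : PMF (X × Y)) : PMF (X × PMF Y) :=
  (p.map Prod.fst).map fun x => (x, p.condSnd x)

open scoped Classical in
theorem disintegrate_apply (p : PMF (X × Y)) (x : X) (q : PMF Y) :
    p.disintegrate (x, q) = if q = p.condSnd x then ∑' y, p (x, y) else 0 := by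
  rw [disintegrate, map_apply, tsum_eq_single x fun x' hx' => ?_, map_fst_apply]
  · simp only [Prod.mk.injEq, true_and]
  · simp [Ne.symm hx']

theorem tsum_disintegrate_mul_apply (p : PMF (X × Y)) (x : X) (y : Y) :
    ∑' q, p.disintegrate (x, q) * q y = p (x, y) := by
  rw [tsum_eq_single (p.condSnd x) fun q hq => by rw [disintegrate_apply, if_neg hq, zero_mul],
    disintegrate_apply, if_pos rfl, tsum_mul_condSnd_apply]

theorem existsUnique_disintegrate_pos {p : PMF (X × Y)} {x : X} (h : 0 < ∑' y, p (x, y)) :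
    ∃! q, 0 < p.disintegrate (x, q) := by
  refine ⟨p.condSnd x, ?_, fun q (hq : 0 < _) => ?_⟩
  · change 0 < p.disintegrate _
    rwa [disintegrate_apply, if_pos rfl]
  by_contra hne
  rw [disintegrate_apply, if_neg hne] at hq
  exact hq.false

theorem apply_eq_div_tsum_of_tsum_mul_eq {w : PMF Y → ℝ≥0∞} {r : Y → ℝ≥0∞}
    (hmix : ∀ y, ∑' q, w q * q y = r y) (hw : ∃! q, 0 < w q) (hr : ∑' y, r y ≠ ∞)
    {q : PMF Y} (hq : 0 < w q) (y : Y) : q y = r y / ∑' y, r y := by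
  obtain ⟨q₀, -, huniq⟩ := hw
  have hw_single : ∀ y, w q * q y = r y := fun y => by
    rw [← hmix, tsum_eq_single q fun q' hq' => ?_]
    rw [nonpos_iff_eq_zero.mp (not_lt.mp fun h => hq' ((huniq q' h).trans (huniq q hq).symm)),
      zero_mul]
  have hw_eq : w q = ∑' y, r y := by
    rw [← mul_one (w q), ← q.tsum_coe, ← ENNReal.tsum_mul_left]
    exact tsum_congr hw_single
  rw [← hw_eq, ENNReal.eq_div_iff hq.ne' (hw_eq ▸ hr), hw_single]

end PMF

/-- The finitely supported distribution monad is strongly representable: every kernel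
`f : A → PMF (X × Y)` admits `f⋄ : A → PMF (X × PMF Y)` which recovers `f` on sampling,
is deterministic given `X`, and any such kernel assigns the unique Bayesian conditional. -/
theorem dist_strongly_representable {A X Y : Type*} (f : A → PMF (X × Y)) :
    ∃ fd : A → PMF (X × PMF Y),
      (∀ a x y, (∑' q : PMF Y, fd a (x, q) * q y) = f a (x, y)) ∧
      (∀ a x, 0 < (∑' y : Y, f a (x, y)) → ∃! q : PMF Y, 0 < fd a (x, q)) ∧
      (∀ g : A → PMF (X × PMF Y),
        (∀ a x y, (∑' q : PMF Y, g a (x, q) * q y) = f a (x, y)) →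
        (∀ a x, 0 < (∑' y : Y, f a (x, y)) → ∃! q : PMF Y, 0 < g a (x, q)) →
        ∀ a x, 0 < (∑' y : Y, f a (x, y)) →
          ∀ q : PMF Y, 0 < g a (x, q) →
            ∀ y, q y = f a (x, y) / (∑' y' : Y, f a (x, y'))) := by
  refine ⟨fun a => (f a).disintegrate, fun a => (f a).tsum_disintegrate_mul_apply,
    fun a _ => PMF.existsUnique_disintegrate_pos, ?_⟩
  intro g hg hdet a x hpos q hq
  exact PMF.apply_eq_div_tsum_of_tsum_mul_eq (hg a x) (hdet a x hpos)
    ((f a).tsum_apply_prod_ne_top x) hq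
end

section
/- Cancellation of sampling for maps deterministic given X: let f, g : A → PMF (X × PMF Y) be kernels that are deterministic given X (for every a and every x in the support of the X-marginal, there is exactly one q ∈ PMF Y with positive probability) and whose X-marginals agree. If for all a, x, y we have Σ_q f(a)(x,q)·q(y) = Σ_q g(a)(x,q)·q(y), then f = g on the support, i.e. f(a)(x,q) = g(a)(x,q) for all a, x, q. -/
open scoped ENNReal

/-! Fix `a` and `x` and view `q ↦ f a (x, q)` as a weight `w` on `PMF Y`. Summing the sampled
distribution `y ↦ ∑' q, w q * q y` over `y` recovers the total mass of `w`, so the two weights have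
equal mass. On positive mass, determinism makes `w = c • δ_p` and `v = d • δ_r`,
and `c • p = d • r` with `c ≠ 0, ∞` gives `c = d` (total mass) and then `p = r`. -/

namespace PMF

variable {Y : Type*}

theorem tsum_tsum_mul_apply (w : PMF Y → ℝ≥0∞) :
    ∑' y, ∑' q : PMF Y, w q * q y = ∑' q, w q := by
  rw [ENNReal.tsum_comm]
  simp only [ENNReal.tsum_mul_left, tsum_coe, mul_one]

theorem eq_of_forall_mul_apply_eq {c d : ℝ≥0∞} {p r : PMF Y} (hc₀ : c ≠ 0) (hc : c ≠ ∞)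
    (h : ∀ y, c * p y = d * r y) : c = d ∧ p = r := by
  have hcd : c = d := by
    simpa only [ENNReal.tsum_mul_left, tsum_coe, mul_one] using congrArg tsum (funext h)
  subst hcd
  exact ⟨rfl, PMF.ext fun y => (ENNReal.mul_right_inj hc₀ hc).1 (h y)⟩

theorem eq_of_forall_tsum_mul_apply_eq {w v : PMF Y → ℝ≥0∞} (hw_top : ∀ q, w q ≠ ∞)
    (hw : 0 < ∑' q, w q → ∃! q, 0 < w q) (hv : 0 < ∑' q, v q → ∃! q, 0 < v q)
    (h : ∀ y, ∑' q, w q * q y = ∑' q, v q * q y) : w = v := by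
  have hsum : ∑' q, w q = ∑' q, v q := by
    simpa only [tsum_tsum_mul_apply] using congrArg tsum (funext h)
  rcases (zero_le : 0 ≤ ∑' q, w q).eq_or_lt with hzero | hpos
  · have hw0 : ∀ q, w q = 0 := ENNReal.tsum_eq_zero.1 hzero.symm
    have hv0 : ∀ q, v q = 0 := ENNReal.tsum_eq_zero.1 (hsum ▸ hzero.symm)
    exact funext fun q => (hw0 q).trans (hv0 q).symm
  obtain ⟨p, hp, hwp⟩ := hw hpos
  obtain ⟨r, -, hvr⟩ := hv (hsum ▸ hpos)
  have hw_single : ∀ q ≠ p, w q = 0 := fun q hq => by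
    simpa [pos_iff_ne_zero] using mt (hwp q) hq
  have hv_single : ∀ q ≠ r, v q = 0 := fun q hq => by
    simpa [pos_iff_ne_zero] using mt (hvr q) hq
  have hmix : ∀ y, w p * p y = v r * r y := fun y => by
    have h := h y
    rwa [tsum_eq_single p fun q hq => by rw [hw_single q hq, zero_mul],
      tsum_eq_single r fun q hq => by rw [hv_single q hq, zero_mul]] at h
  obtain ⟨hwv, rfl⟩ := eq_of_forall_mul_apply_eq hp.ne' (hw_top p) hmix
  funext q
  by_cases hq : q = p
  · rw [hq, hwv]
  · rw [hw_single q hq, hv_single q hq]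

end PMF

theorem samp_cancellation_general {A X Y : Type*} (f g : A → PMF (X × PMF Y))
    (hf : ∀ a x, 0 < (∑' q : PMF Y, f a (x, q)) → ∃! q : PMF Y, 0 < f a (x, q))
    (hg : ∀ a x, 0 < (∑' q : PMF Y, g a (x, q)) → ∃! q : PMF Y, 0 < g a (x, q))
    (h : ∀ a x y, (∑' q : PMF Y, f a (x, q) * q y) = ∑' q : PMF Y, g a (x, q) * q y) :
    ∀ a x q, f a (x, q) = g a (x, q) := fun a x =>
  congrFun (PMF.eq_of_forall_tsum_mul_apply_eq (fun _ => (f a).apply_ne_top _) (hf a x) (hg a x)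
    (h a x))

/-- Cancellation of sampling for kernels deterministic given `X`: if two such kernels
have the same `X`-marginals and agree after sampling the inner distribution, they agree. -/
theorem samp_cancellation {A X Y : Type*} (f g : A → PMF (X × PMF Y))
    (hf : ∀ a x, 0 < (∑' q : PMF Y, f a (x, q)) → ∃! q : PMF Y, 0 < f a (x, q))
    (hg : ∀ a x, 0 < (∑' q : PMF Y, g a (x, q)) → ∃! q : PMF Y, 0 < g a (x, q))
    (hmarg : ∀ a x, (∑' q : PMF Y, f a (x, q)) = ∑' q : PMF Y, g a (x, q))
    (h : ∀ a x y, (∑' q : PMF Y, f a (x, q) * q y) = ∑' q : PMF Y, g a (x, q) * q y) :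
    ∀ a x q, f a (x, q) = g a (x, q) :=
  samp_cancellation_general f g hf hg h
end

section
/- Existence of Bayesian inverses for finitely supported distributions: given a statistical model f : Θ → PMF X and a prior p ∈ PMF Θ, there exists a kernel f†_p : X → PMF Θ such that for all θ and x: p(θ) · f(θ)(x) = (Σ_{θ'} p(θ') · f(θ')(x)) · f†_p(x)(θ). Moreover f†_p(x) is uniquely determined for every x with Σ_{θ'} p(θ')·f(θ')(x) > 0, where it equals the Bayesian posterior f†_p(x)(θ) = p(θ)f(θ)(x) / Σ_{θ'} p(θ')f(θ')(x). -/
/-!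
The evidence `∑' θ', p θ' * f θ' x` is the marginal `(p.bind f) x`, a probability and hence
finite. Where it is positive, normalising `θ ↦ p θ * f θ x` by it gives the posterior, and
dividing the defining equation by it forces every Bayesian inverse to agree with that
posterior. Where it vanishes, every term `p θ * f θ x` vanishes, so any distribution works.
-/

namespace PMF

variable {Θ X : Type*}

/-- On null evidence the posterior is arbitrary; we take the prior. -/
noncomputable def posterior (p : PMF Θ) (f : Θ → PMF X) (x : X) : PMF Θ :=
  if h : p.bind f x = 0 then p
  else normalize (fun θ => p θ * f θ x) h ((p.bind f).apply_ne_top x)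

theorem posterior_apply_of_ne_zero (p : PMF Θ) (f : Θ → PMF X) {x : X}
    (hx : p.bind f x ≠ 0) (θ : Θ) : posterior p f x θ = p θ * f θ x / p.bind f x := by
  rw [posterior, dif_neg hx]
  exact (div_eq_mul_inv _ _).symm

theorem mul_apply_eq_of_bind_apply_eq_zero (p : PMF Θ) (f : Θ → PMF X) {x : X}
    (hx : p.bind f x = 0) (θ : Θ) : p θ * f θ x = 0 :=
  ENNReal.tsum_eq_zero.mp hx θ

theorem mul_apply_eq_bind_apply_mul_posterior (p : PMF Θ) (f : Θ → PMF X) (x : X) (θ : Θ) :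
    p θ * f θ x = p.bind f x * posterior p f x θ := by
  by_cases hx : p.bind f x = 0
  · rw [mul_apply_eq_of_bind_apply_eq_zero p f hx, hx, zero_mul]
  · rw [posterior_apply_of_ne_zero p f hx, ENNReal.mul_div_cancel hx (apply_ne_top _ x)]

theorem eq_posterior_of_mul_apply_eq_bind_apply_mul (p : PMF Θ) (f : Θ → PMF X) {x : X}
    (hx : p.bind f x ≠ 0) {q : PMF Θ} (hq : ∀ θ, p θ * f θ x = p.bind f x * q θ) :
    q = posterior p f x := by
  ext θ
  rw [posterior_apply_of_ne_zero p f hx, ENNReal.eq_div_iff hx (apply_ne_top _ x), hq]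

end PMF

/-- Existence and almost-sure uniqueness of Bayesian inverses for finitely supported
distributions, with the explicit Bayesian posterior formula on positive evidence. -/
theorem bayesian_inverse_exists {Θ X : Type*} (f : Θ → PMF X) (p : PMF Θ) :
    ∃ fi : X → PMF Θ,
      (∀ θ x, p θ * f θ x = (∑' θ' : Θ, p θ' * f θ' x) * fi x θ) ∧
      (∀ fi' : X → PMF Θ,
        (∀ θ x, p θ * f θ x = (∑' θ' : Θ, p θ' * f θ' x) * fi' x θ) →
        ∀ x, 0 < (∑' θ' : Θ, p θ' * f θ' x) →
          ∀ θ, fi' x θ = p θ * f θ x / (∑' θ' : Θ, p θ' * f θ' x)) := by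
  simp only [← PMF.bind_apply]
  refine ⟨PMF.posterior p f, fun θ x => PMF.mul_apply_eq_bind_apply_mul_posterior p f x θ,
    fun fi' hfi' x hx θ => ?_⟩
  rw [PMF.eq_posterior_of_mul_apply_eq_bind_apply_mul p f hx.ne' (fun θ => hfi' θ x),
    PMF.posterior_apply_of_ne_zero p f hx.ne']
end

section
/- Two-step Bayesian filtering computes the two-step conditional: let H, I, O be types and κ : H × I → PMF (H × O) a kernel with the comb property that the O-marginal κ•(h)(o) := Σ_{h'} κ(h,i)(h',o) does not depend on i. For a prior b ∈ PMF H define the predictive distribution P(b)(o) := Σ_h b(h)·κ•(h)(o), and for P(b)(o) > 0 define the filter update u(b,i,o)(h') := (Σ_h b(h)·κ(h,i)(h',o)) / P(b)(o). Then for any prior b, inputs i₁,i₂ and outputs o₁,o₂ with P(b)(o₁) > 0 and P(u(b,i₁,o₁))(o₂) > 0, the distribution u(u(b,i₁,o₁), i₂, o₂) equals the conditional distribution of the hidden state after two steps of κ, started from b with inputs i₁,i₂, given that the two observed outputs are o₁,o₂; explicitly, for all h'': u(u(b,i₁,o₁),i₂,o₂)(h'') = (Σ_{h,h'} b(h)·κ(h,i₁)(h',o₁)·κ(h',i₂)(h'',o₂))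 / (Σ_{h,h',h''} b(h)·κ(h,i₁)(h',o₁)·κ(h',i₂)(h'',o₂)). -/
open scoped ENNReal

/-- The predictive probability of output `o` from belief `b` under kernel `κ` with input `i`. -/
noncomputable def predProb {H I O : Type*} (κ : H × I → PMF (H × O)) (b : H → ℝ≥0∞)
    (i : I) (o : O) : ℝ≥0∞ :=
  ∑' h : H, ∑' h' : H, b h * κ (h, i) (h', o)

/-- The Bayesian filter update of belief `b` upon input `i` and observed output `o`. -/
noncomputable def filterUpd {H I O : Type*} (κ : H × I → PMF (H × O)) (b : H → ℝ≥0∞)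
    (i : I) (o : O) : H → ℝ≥0∞ :=
  fun h' => (∑' h : H, b h * κ (h, i) (h', o)) / predProb κ b i o

private lemma div_div_div_cancel'' (A B Z : ℝ≥0∞) (hZ0 : Z ≠ 0) (hZt : Z ≠ ⊤) :
    (A / Z) / (B / Z) = A / B := by
  rw [div_eq_mul_inv, div_eq_mul_inv, div_eq_mul_inv B,
    ENNReal.mul_inv (Or.inr (by simp [hZ0])) (Or.inr (by simp [hZt])),
    inv_inv]
  calc A * Z⁻¹ * (B⁻¹ * Z) = A * B⁻¹ * (Z⁻¹ * Z) := by ring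
    _ = A * B⁻¹ := by rw [ENNReal.inv_mul_cancel hZ0 hZt, mul_one]

/-- Two-step Bayesian filtering computes the two-step conditional distribution of the
hidden state given the two observed outputs. -/
theorem two_step_filtering {H I O : Type*} (κ : H × I → PMF (H × O))
    (hcomb : ∀ (h : H) (i i' : I) (o : O),
      (∑' h' : H, κ (h, i) (h', o)) = ∑' h' : H, κ (h, i') (h', o))
    (b : PMF H) (i₁ i₂ : I) (o₁ o₂ : O)
    (h1 : 0 < predProb κ (⇑b) i₁ o₁)
    (h2 : 0 < predProb κ (filterUpd κ (⇑b) i₁ o₁) i₂ o₂) :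
    ∀ h'' : H,
      filterUpd κ (filterUpd κ (⇑b) i₁ o₁) i₂ o₂ h''
        = (∑' h : H, ∑' h' : H, b h * κ (h, i₁) (h', o₁) * κ (h', i₂) (h'', o₂))
          / ∑' h''' : H, ∑' h : H, ∑' h' : H,
              b h * κ (h, i₁) (h', o₁) * κ (h', i₂) (h''', o₂) := by
  intro h''
  set Z := predProb κ (⇑b) i₁ o₁ with hZ
  have hZ0 : Z ≠ 0 := h1.ne'
  have hZt : Z ≠ ⊤ := by
    have hle : Z ≤ 1 := by
      rw [hZ, predProb]
      calc ∑' h : H, ∑' h' : H, b h * κ (h, i₁) (h', o₁)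
          ≤ ∑' h : H, b h * 1 := by
            refine ENNReal.tsum_le_tsum fun h => ?_
            rw [ENNReal.tsum_mul_left]
            refine mul_le_mul_right ?_ _
            calc (∑' h' : H, κ (h, i₁) (h', o₁))
                ≤ ∑' p : H × O, κ (h, i₁) p :=
                  ENNReal.tsum_comp_le_tsum_of_injective
                    (f := fun h' : H => ((h', o₁) : H × O))
                    (fun a a' ha => (Prod.mk.injEq .. ▸ ha).1) _
              _ = 1 := (κ (h, i₁)).tsum_coe
        _ = 1 := by simp
    exact (lt_of_le_of_lt hle (by norm_num)).ne
  -- abbreviations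
  have hnum : ∀ h' : H, filterUpd κ (⇑b) i₁ o₁ h'
      = (∑' h : H, b h * κ (h, i₁) (h', o₁)) / Z := fun _ => rfl
  -- numerator of outer filter
  have key : ∀ g : H → ℝ≥0∞,
      (∑' h' : H, filterUpd κ (⇑b) i₁ o₁ h' * g h')
        = (∑' h : H, ∑' h' : H, b h * κ (h, i₁) (h', o₁) * g h') / Z := by
    intro g
    calc ∑' h' : H, filterUpd κ (⇑b) i₁ o₁ h' * g h'
        = ∑' h' : H, (∑' h : H, b h * κ (h, i₁) (h', o₁) * g h') / Z := by
          refine tsum_congr fun h' => ?_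
          rw [hnum, div_eq_mul_inv, div_eq_mul_inv, mul_right_comm, ENNReal.tsum_mul_right]
      _ = (∑' h' : H, ∑' h : H, b h * κ (h, i₁) (h', o₁) * g h') / Z := by
          simp_rw [div_eq_mul_inv]; rw [ENNReal.tsum_mul_right]
      _ = (∑' h : H, ∑' h' : H, b h * κ (h, i₁) (h', o₁) * g h') / Z := by
          rw [ENNReal.tsum_comm]
  have hA : (∑' h' : H, filterUpd κ (⇑b) i₁ o₁ h' * κ (h', i₂) (h'', o₂))
      = (∑' h : H, ∑' h' : H, b h * κ (h, i₁) (h', o₁) * κ (h', i₂) (h'', o₂)) / Z :=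
    key _
  have hB : predProb κ (filterUpd κ (⇑b) i₁ o₁) i₂ o₂
      = (∑' h''' : H, ∑' h : H, ∑' h' : H,
          b h * κ (h, i₁) (h', o₁) * κ (h', i₂) (h''', o₂)) / Z := by
    rw [predProb]
    calc ∑' h' : H, ∑' h''' : H, filterUpd κ (⇑b) i₁ o₁ h' * κ (h', i₂) (h''', o₂)
        = ∑' h''' : H, ∑' h' : H, filterUpd κ (⇑b) i₁ o₁ h' * κ (h', i₂) (h''', o₂) :=
          ENNReal.tsum_comm
      _ = ∑' h''' : H, (∑' h : H, ∑' h' : H,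
            b h * κ (h, i₁) (h', o₁) * κ (h', i₂) (h''', o₂)) / Z :=
          tsum_congr fun h''' => key _
      _ = _ := by simp_rw [div_eq_mul_inv]; rw [ENNReal.tsum_mul_right]
  show (∑' h' : H, filterUpd κ (⇑b) i₁ o₁ h' * κ (h', i₂) (h'', o₂))
      / predProb κ (filterUpd κ (⇑b) i₁ o₁) i₂ o₂ = _
  rw [hA, hB, div_div_div_cancel'' _ _ _ hZ0 hZt]
end

section
/- The filtering adjunction bijection in Dist: let (S, α) be a unifilar comb machine (α : S × I → PMF (S × O), deterministic given O) and (H, κ) a comb machine over finitely supported distributions. A kernel f : S → PMF H underlies a morphism of comb machines F(S,α) → (H,κ), i.e. Σ_{s'} α(s,i)(s',o)·f(s')(h') = Σ_h f(s)(h)·κ(h,i)(h',o) for all s,i,h',o, if and only if the deterministic map f□ : S → PMF H, s ↦ f(s), underlies a morphism of unifilar machines (S,α) → B((H,κ)), i.e. for all s, i, o with positive predictive probability, applying the update of α to state s with input i and output o and then f□ yields the Bayesian posterior update of the belief f(s) with respect to κ. -/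
/-!
By unifilarity the sum over `s'` on the left collapses to `αr s o * f (u s i o) h'`, so the
comb-morphism condition says that the joint weights `h' ↦ ∑' h, f s h * κ (h, i) (h', o)`
factor as the scalar `αr s o` times the distribution `f (u s i o)`. Such a factorization
holds exactly when the scalar is the total mass of the joint weights, which is the readout
condition, and, when that mass is positive, the distribution is the normalized joint, which
is the Bayesian posterior.
-/

open scoped ENNReal

theorem PMF.forall_mul_apply_eq_iff {β : Type*} (q : PMF β) {g : β → ℝ≥0∞} {a c : ℝ≥0∞}
    (ha : a ≠ ∞) (hg : ∑' b, g b = c) :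
    (∀ b, a * q b = g b) ↔ a = c ∧ (0 < c → ∀ b, q b = g b / c) := by
  constructor
  · intro hfac
    have hac : a = c := by
      rw [← hg, ← funext hfac, ENNReal.tsum_mul_left, q.tsum_coe, mul_one]
    subst hac
    exact ⟨rfl, fun hpos b => (ENNReal.eq_div_iff hpos.ne' ha).mpr (hfac b)⟩
  · rintro ⟨rfl, hnorm⟩ b
    rcases eq_zero_or_pos a with ha0 | hpos
    · rw [ha0, zero_mul, eq_comm]
      exact ENNReal.tsum_eq_zero.mp (hg.trans ha0) b
    · rw [hnorm hpos b, ENNReal.mul_div_cancel hpos.ne' ha]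

section Unifilar

variable {S I O : Type*} {α : S × I → PMF (S × O)} {αr : S → PMF O} {u : S → I → O → S}

theorem tsum_apply_mul_eq_of_unifilar (hα1 : ∀ s i o, α (s, i) (u s i o, o) = αr s o)
    (hα2 : ∀ s i o s', s' ≠ u s i o → α (s, i) (s', o) = 0) (g : S → ℝ≥0∞) (s : S) (i : I)
    (o : O) : ∑' s', α (s, i) (s', o) * g s' = αr s o * g (u s i o) := by
  rw [tsum_eq_single (u s i o) fun s' hs' => by rw [hα2 s i o s' hs', zero_mul], hα1]

end Unifilar

theorem tsum_tsum_mul_eq_tsum_mul_readout {H I O : Type*} {κ : H × I → PMF (H × O)}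
    {κr : H → PMF O} (hκ : ∀ h i o, ∑' h' : H, κ (h, i) (h', o) = κr h o) (b : H → ℝ≥0∞)
    (i : I) (o : O) :
    ∑' h, ∑' h', b h * κ (h, i) (h', o) = ∑' h, b h * κr h o := by
  simp_rw [ENNReal.tsum_mul_left, hκ]

/-- The hom-set bijection of the adjunction `F ⊣ B` in `Dist`: a kernel `f : S → PMF H`
underlies a morphism of comb machines `F(S,α) → (H,κ)` iff the deterministic map `f□`
underlies a morphism of unifilar machines `(S,α) → B((H,κ))`, i.e. readouts are
preserved and updating `α` then applying `f` yields the Bayesian posterior. -/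
theorem filtering_adjunction_bijection {S H I O : Type*} [Nonempty I]
    (α : S × I → PMF (S × O)) (αr : S → PMF O) (u : S → I → O → S)
    (hα1 : ∀ s i o, α (s, i) (u s i o, o) = αr s o)
    (hα2 : ∀ s i o s', s' ≠ u s i o → α (s, i) (s', o) = 0)
    (κ : H × I → PMF (H × O)) (κr : H → PMF O)
    (hκ : ∀ h i o, (∑' h' : H, κ (h, i) (h', o)) = κr h o)
    (f : S → PMF H) :
    (∀ s i h' o,
        (∑' s' : S, α (s, i) (s', o) * f s' h') = ∑' h : H, f s h * κ (h, i) (h', o))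
    ↔
    ((∀ s o, αr s o = ∑' h : H, f s h * κr h o) ∧
      ∀ s i o, 0 < (∑' h : H, f s h * κr h o) →
        ∀ h', f (u s i o) h' = (∑' h : H, f s h * κ (h, i) (h', o))
          / ∑' h : H, ∑' h'' : H, f s h * κ (h, i) (h'', o)) := by
  have hfactor : ∀ s i o,
      (∀ h', ∑' s', α (s, i) (s', o) * f s' h' = ∑' h, f s h * κ (h, i) (h', o)) ↔
        αr s o = ∑' h, f s h * κr h o ∧ (0 < ∑' h, f s h * κr h o →
          ∀ h', f (u s i o) h' = (∑' h, f s h * κ (h, i) (h', o))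
            / ∑' h, ∑' h'', f s h * κ (h, i) (h'', o)) := by
    intro s i o
    simp_rw [tsum_apply_mul_eq_of_unifilar hα1 hα2 (fun s' => f s' _),
      tsum_tsum_mul_eq_tsum_mul_readout hκ]
    refine (f (u s i o)).forall_mul_apply_eq_iff (PMF.apply_ne_top _ _) ?_
    rw [ENNReal.tsum_comm, tsum_tsum_mul_eq_tsum_mul_readout hκ]
  calc _ ↔ ∀ s i o, ∀ h', ∑' s', α (s, i) (s', o) * f s' h' = ∑' h, f s h * κ (h, i) (h', o) :=
        forall_congr' fun _ => forall_congr' fun _ => forall_comm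
    _ ↔ _ := by simp only [hfactor, forall_and, forall_const]
end

section
/- Unifilar machines induce controlled stochastic processes satisfying the causality condition: let (S, α) be a comb machine over finitely supported distributions with readout α• and fix a state s ∈ S. Define p_n : I^{n-1} → PMF (O^n) by running the machine: p_1 := α•(s), and p_{n+1}(i₁,…,i_n)(o₀,…,o_n) := Σ over state trajectories s=s₀,s₁,…,s_n of Π_{k=0}^{n-1} α(s_k, i_{k+1})(s_{k+1}, o_k) · α•(s_n)(o_n). Then the family (p_n) is an output-first controlled stochastic process: marginalizing p_{n+1}(i₁,…,i_n) over the last output o_n yields a distribution on (o₀,…,o_{n-1}) that does not depend on the last input i_n and equals p_n(i₁,…,i_{n-1}). -/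
/-!
Marginalising the last output of a run is a sum that commutes (in `ℝ≥0∞`) with the sums over
intermediate states, so it can be pushed down to the last transition. There the readout has
total mass one, and the comb condition `∑ s', α (s, i) (s', o) = αr s o` turns the last
transition back into the readout, which no longer sees the last input.
-/

open scoped ENNReal

/-- Run a comb machine with transition `α` and readout `αr` from a state, on a list of
inputs and a list of outputs (one output more than inputs): the probability of producing
that output sequence, first output emitted before the first input. -/
noncomputable def combRun {S I O : Type*} (α : S × I → PMF (S × O)) (αr : S → PMF O) :
    S → List I → List O → ℝ≥0∞
  | s, [], [o] => αr s o
  | _, [], [] => 0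
  | _, [], _ :: _ :: _ => 0
  | s, i :: is, o :: os => ∑' s' : S, α (s, i) (s', o) * combRun α αr s' is os
  | _, _ :: _, [] => 0

section

variable {S I O : Type*} (α : S × I → PMF (S × O)) (αr : S → PMF O)

theorem tsum_combRun_cons_cons_append_singleton (s : S) (i : I) (is : List I) (o₀ : O)
    (os : List O) :
    ∑' o, combRun α αr s (i :: is) (o₀ :: (os ++ [o])) =
      ∑' s', α (s, i) (s', o₀) * ∑' o, combRun α αr s' is (os ++ [o]) := by
  simp only [combRun, ← ENNReal.tsum_mul_left]
  exact ENNReal.tsum_comm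

variable {α αr}

theorem tsum_combRun_singleton_append_singleton
    (hcomb : ∀ s i o, ∑' s', α (s, i) (s', o) = αr s o) (s : S) (i : I) (os : List O) :
    ∑' o, combRun α αr s [i] (os ++ [o]) = combRun α αr s [] os := by
  match os with
  | [] => simp [combRun]
  | [o₀] =>
    refine (tsum_combRun_cons_cons_append_singleton α αr s i [] o₀ []).trans ?_
    simp [combRun, hcomb]
  | o₀ :: o₁ :: os =>
    refine (tsum_combRun_cons_cons_append_singleton α αr s i [] o₀ (o₁ :: os)).trans ?_
    cases os <;> simp [combRun]

theorem tsum_combRun_append_singleton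
    (hcomb : ∀ s i o, ∑' s', α (s, i) (s', o) = αr s o) (s : S) (is : List I) (i : I)
    (os : List O) :
    ∑' o, combRun α αr s (is ++ [i]) (os ++ [o]) = combRun α αr s is os := by
  induction is generalizing s os with
  | nil => exact tsum_combRun_singleton_append_singleton hcomb s i os
  | cons i' is ih =>
    match os with
    | [] => cases is <;> simp [combRun]
    | o₀ :: os =>
      refine (tsum_combRun_cons_cons_append_singleton α αr s i' (is ++ [i]) o₀ os).trans ?_
      simp only [ih, combRun]

end

/-- Running a comb machine from a fixed state yields an output-first controlled
stochastic process: marginalising over the last output removes the dependence on the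
last input and recovers the shorter process. -/
theorem comb_machine_gives_process {S I O : Type*} (α : S × I → PMF (S × O))
    (αr : S → PMF O)
    (hcomb : ∀ s i o, (∑' s' : S, α (s, i) (s', o)) = αr s o) :
    ∀ (s : S) (is : List I) (i : I) (os : List O), os.length = is.length + 1 →
      (∑' o : O, combRun α αr s (is ++ [i]) (os ++ [o])) = combRun α αr s is os :=
  fun s is i os _ => tsum_combRun_append_singleton hcomb s is i os
end

section
/- Conditioning a controlled stochastic process yields a controlled stochastic process: let (p_n)_{n≥1} with p_n : I^{n-1} → PMF (O^n) be an output-first controlled stochastic process, and let i ∈ I, o ∈ O with p_1(o) > 0. Define p^{i,o}_n(i₁,…,i_{n-1})(o₀,…,o_{n-1}) := p_{n+1}(i,i₁,…,i_{n-1})(o,o₀,…,o_{n-1}) / p_1(o). Then each p^{i,o}_n is a probability distribution on O^n, and the family (p^{i,o}_n) again satisfies the causality condition, hence is an output-first controlled stochastic process. -/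
/-!
Causality says that summing `p_{n+1}` over its last output gives `p_n`, whatever the last
input was. Peeling off the last input/output pair repeatedly therefore shows that the
marginal of the first output of every `p_n` is `p_1`, so the conditioned masses add up to
`p_1(o) / p_1(o) = 1`; causality of the conditioned family is causality of `p` one index up.
-/

open scoped ENNReal

theorem ENNReal.tsum_fin_snoc {α : Type*} {n : ℕ} (g : (Fin (n + 1) → α) → ℝ≥0∞) :
    ∑' f, g f = ∑' (f : Fin n → α) (a : α), g (Fin.snoc f a) := by
  rw [← (Fin.snocEquiv fun _ => α).tsum_eq, ENNReal.tsum_prod', ENNReal.tsum_comm]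
  rfl

/-- `p n` is the paper's `p_{n+1}`: it takes `n` inputs and returns a law of `n + 1` outputs. -/
def IsCausal {I O : Type*} (p : (n : ℕ) → (Fin n → I) → PMF (Fin (n + 1) → O)) : Prop :=
  ∀ (n : ℕ) (is : Fin n → I) (i : I) (os : Fin (n + 1) → O),
    (∑' o : O, p (n + 1) (Fin.snoc is i) (Fin.snoc os o)) = p n is os

namespace IsCausal

variable {I O : Type*} {p : (n : ℕ) → (Fin n → I) → PMF (Fin (n + 1) → O)}

theorem tsum_cons_snoc (hp : IsCausal p) (i : I) (o : O) {n : ℕ} (is : Fin n → I) (i' : I)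
    (os : Fin (n + 1) → O) :
    ∑' o', p (n + 2) (Fin.cons i (Fin.snoc is i')) (Fin.cons o (Fin.snoc os o'))
      = p (n + 1) (Fin.cons i is) (Fin.cons o os) := by
  simp only [Fin.cons_snoc_eq_snoc_cons]
  exact hp (n + 1) (Fin.cons i is) i' (Fin.cons o os)

theorem tsum_cons (hp : IsCausal p) (o : O) :
    ∀ {n : ℕ} (is : Fin n → I), ∑' os, p n is (Fin.cons o os) = p 0 Fin.elim0 (fun _ => o)
  | 0, is => by
    rw [tsum_fintype, Fintype.sum_unique, Subsingleton.elim is Fin.elim0]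
    congr 1
    funext j
    rw [Fin.fin_one_eq_zero j]
    rfl
  | n + 1, is => by
    rw [ENNReal.tsum_fin_snoc, ← tsum_cons hp o (Fin.init is)]
    refine tsum_congr fun os => ?_
    rw [← hp n (Fin.init is) (is (Fin.last n)) (Fin.cons o os), Fin.snoc_init_self]
    simp only [Fin.cons_snoc_eq_snoc_cons]

end IsCausal

/-- Conditioning a controlled stochastic process on its first input/output yields a
controlled stochastic process: the conditioned family is normalised and again satisfies
the causality condition. Here `p n` is the paper's `p_{n+1}`, taking `n` inputs and
`n+1` outputs. -/
theorem conditioned_process_is_process {I O : Type*}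
    (p : (n : ℕ) → (Fin n → I) → PMF (Fin (n + 1) → O))
    (hcaus : ∀ (n : ℕ) (is : Fin n → I) (i : I) (os : Fin (n + 1) → O),
      (∑' o : O, p (n + 1) (Fin.snoc is i) (Fin.snoc os o)) = p n is os)
    (i : I) (o : O)
    (hpos : 0 < p 0 Fin.elim0 (fun _ => o)) :
    (∀ (n : ℕ) (is : Fin n → I),
      (∑' os : Fin (n + 1) → O,
        p (n + 1) (Fin.cons i is) (Fin.cons o os) / p 0 Fin.elim0 (fun _ => o)) = 1) ∧
    (∀ (n : ℕ) (is : Fin n → I) (i' : I) (os : Fin (n + 1) → O),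
      (∑' o' : O,
        p (n + 2) (Fin.cons i (Fin.snoc is i')) (Fin.cons o (Fin.snoc os o'))
          / p 0 Fin.elim0 (fun _ => o))
      = p (n + 1) (Fin.cons i is) (Fin.cons o os) / p 0 Fin.elim0 (fun _ => o)) := by
  have hp : IsCausal p := hcaus
  simp only [ENNReal.div_eq_inv_mul, ENNReal.tsum_mul_left]
  refine ⟨fun n is => ?_, fun n is i' os => ?_⟩
  · rw [hp.tsum_cons o (Fin.cons i is)]
    exact ENNReal.inv_mul_cancel hpos.ne' (PMF.apply_ne_top _ _)
  · rw [hp.tsum_cons_snoc i o is i' os]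
end

section
/- Uniqueness of the morphism to the terminal unifilar machine: let (S, α) be a unifilar comb machine over finitely supported distributions and let T be the set of output-first controlled stochastic processes with the machine structure ω (readout p ↦ p_1, update (p,i,o) ↦ p^{i,o} for p_1(o) > 0). Then any morphism of unifilar machines h : (S,α) → (T,ω) must send each state s ∈ S to the controlled stochastic process obtained by running α from s; consequently there is at most one morphism (S,α) → (T,ω). -/
open scoped ENNReal

/-- Run a comb machine (with unifilar transition `α`, readout `αr`) from a state on
`n` inputs and `n + 1` outputs, output-first. -/
noncomputable def combRunF {S I O : Type*} (α : S × I → PMF (S × O)) (αr : S → PMF O) :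
    S → (n : ℕ) → (Fin n → I) → (Fin (n + 1) → O) → ℝ≥0∞
  | s, 0, _, os => αr s (os 0)
  | s, n + 1, is, os =>
      ∑' s' : S, α (s, is 0) (s', os 0) * combRunF α αr s' n (is ∘ Fin.succ) (os ∘ Fin.succ)

theorem IsCausal.apply_le_apply_zero {I O : Type*}
    {p : (n : ℕ) → (Fin n → I) → PMF (Fin (n + 1) → O)} (hp : IsCausal p) :
    ∀ (n : ℕ) (is : Fin n → I) (os : Fin (n + 1) → O),
      p n is os ≤ p 0 Fin.elim0 (fun _ => os 0)
  | 0, is, os => by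
    rw [Subsingleton.elim is Fin.elim0]
    exact (congrArg _ (eq_const_of_subsingleton (α := Fin 1) os 0)).le
  | n + 1, is, os =>
    calc p (n + 1) is os
        = p (n + 1) (Fin.snoc (Fin.init is) (is (Fin.last n)))
            (Fin.snoc (Fin.init os) (os (Fin.last (n + 1)))) := by
          rw [Fin.snoc_init_self, Fin.snoc_init_self]
      _ ≤ ∑' o : O, p (n + 1) (Fin.snoc (Fin.init is) (is (Fin.last n)))
            (Fin.snoc (Fin.init os) o) := ENNReal.le_tsum _
      _ = p n (Fin.init is) (Fin.init os) := hp n _ _ _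
      _ ≤ p 0 Fin.elim0 (fun _ => os 0) := hp.apply_le_apply_zero n _ _

section Unifilar

variable {S I O : Type*} {α : S × I → PMF (S × O)} {αr : S → PMF O} {u : S → I → O → S}

theorem combRunF_succ_of_unifilar (hα1 : ∀ s i o, α (s, i) (u s i o, o) = αr s o)
    (hα2 : ∀ s i o s', s' ≠ u s i o → α (s, i) (s', o) = 0)
    (s : S) (n : ℕ) (is : Fin (n + 1) → I) (os : Fin (n + 2) → O) :
    combRunF α αr s (n + 1) is os
      = αr s (os 0) * combRunF α αr (u s (is 0) (os 0)) n (Fin.tail is) (Fin.tail os) := by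
  rw [combRunF, tsum_eq_single (u s (is 0) (os 0)) fun s' hs' => by
    rw [hα2 s (is 0) (os 0) s' hs', zero_mul], hα1]
  rfl

theorem eq_combRunF_of_isMorphism (hα1 : ∀ s i o, α (s, i) (u s i o, o) = αr s o)
    (hα2 : ∀ s i o s', s' ≠ u s i o → α (s, i) (s', o) = 0)
    {h : S → (n : ℕ) → (Fin n → I) → PMF (Fin (n + 1) → O)} (hcaus : ∀ s, IsCausal (h s))
    (hread : ∀ s o, αr s o = h s 0 Fin.elim0 (fun _ => o))
    (hupd : ∀ s i o, 0 < αr s o → ∀ (n : ℕ) (is : Fin n → I) (os : Fin (n + 1) → O),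
      h (u s i o) n is os
        = h s (n + 1) (Fin.cons i is) (Fin.cons o os) / h s 0 Fin.elim0 (fun _ => o))
    (s : S) (n : ℕ) (is : Fin n → I) (os : Fin (n + 1) → O) :
    h s n is os = combRunF α αr s n is os := by
  induction n generalizing s with
  | zero =>
    rw [combRunF, hread, Subsingleton.elim is Fin.elim0]
    exact congrArg _ (eq_const_of_subsingleton (α := Fin 1) os 0)
  | succ n ih =>
    rw [combRunF_succ_of_unifilar hα1 hα2, ← ih]
    rcases eq_zero_or_pos (αr s (os 0)) with hzero | hpos
    · rw [hzero, zero_mul, ← nonpos_iff_eq_zero, ← hzero, hread]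
      exact (hcaus s).apply_le_apply_zero (n + 1) is os
    · rw [hupd s (is 0) (os 0) hpos, ← hread, Fin.cons_self_tail, Fin.cons_self_tail,
        ENNReal.mul_div_cancel hpos.ne' (PMF.apply_ne_top _ _)]

end Unifilar

/-- Uniqueness of the morphism to the terminal unifilar machine in `Dist`: any morphism
of unifilar machines from `(S, α)` to the machine of controlled stochastic processes must
send each state to the process obtained by running `α` from it; consequently there is at
most one such morphism. -/
theorem terminal_unifilar_unique {S I O : Type*}
    (α : S × I → PMF (S × O)) (αr : S → PMF O) (u : S → I → O → S)
    (hα1 : ∀ s i o, α (s, i) (u s i o, o) = αr s o)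
    (hα2 : ∀ s i o s', s' ≠ u s i o → α (s, i) (s', o) = 0)
    (h h' : S → (n : ℕ) → (Fin n → I) → PMF (Fin (n + 1) → O))
    (hcaus : ∀ (s : S) (n : ℕ) (is : Fin n → I) (i : I) (os : Fin (n + 1) → O),
      (∑' o : O, h s (n + 1) (Fin.snoc is i) (Fin.snoc os o)) = h s n is os)
    (hcaus' : ∀ (s : S) (n : ℕ) (is : Fin n → I) (i : I) (os : Fin (n + 1) → O),
      (∑' o : O, h' s (n + 1) (Fin.snoc is i) (Fin.snoc os o)) = h' s n is os)
    (hread : ∀ s o, αr s o = h s 0 Fin.elim0 (fun _ => o))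
    (hread' : ∀ s o, αr s o = h' s 0 Fin.elim0 (fun _ => o))
    (hupd : ∀ s i o, 0 < αr s o → ∀ (n : ℕ) (is : Fin n → I) (os : Fin (n + 1) → O),
      h (u s i o) n is os
        = h s (n + 1) (Fin.cons i is) (Fin.cons o os) / h s 0 Fin.elim0 (fun _ => o))
    (hupd' : ∀ s i o, 0 < αr s o → ∀ (n : ℕ) (is : Fin n → I) (os : Fin (n + 1) → O),
      h' (u s i o) n is os
        = h' s (n + 1) (Fin.cons i is) (Fin.cons o os) / h' s 0 Fin.elim0 (fun _ => o)) :
    (∀ (s : S) (n : ℕ) (is : Fin n → I) (os : Fin (n + 1) → O),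
      h s n is os = combRunF α αr s n is os) ∧ h = h' := by
  have hrun := eq_combRunF_of_isMorphism hα1 hα2 hcaus hread hupd
  have hrun' := eq_combRunF_of_isMorphism hα1 hα2 hcaus' hread' hupd'
  refine ⟨hrun, ?_⟩
  funext s n is
  ext os
  rw [hrun, hrun']
end
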